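/- Let Φ : ℝⁿ → ℝⁿ be a shape-preserving invertible Lipschitz map with ‖DΦ‖_∞ ≤ 1 for which the change of variables formula holds. Then Φ is A₂-stable (there exists C with A₂(Φ_*σ, Φ_*ω) ≤ C A₂(σ,ω) for all locally finite positive Borel measure pairs) if and only if Φ is biLipschitz. -/

import Mathlib

/-! Both directions compare preimages of cubes with cubes. If `Φ⁻¹` is `L`-Lipschitz, the preimage
of a cube of side `r` lies in a cube of side `≍ L√n r`, which costs only a constant factor in each
average `σ(Q)/|Q|`. Conversely, testing `A₂`-stability on the pair (Lebesgue, Lebesgue), whose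
characteristic is `1`, gives `|Φ⁻¹(Q)| ≲ |Q|`; the inner cube of the shape-preserving condition then
has side `≲ ℓ(Q)`, the outer one side `≲ K ℓ(Q)`, so `Φ⁻¹` maps cubes to sets of diameter
`≲ ℓ(Q)`, i.e. it is Lipschitz. -/

open MeasureTheory Set ENNReal NNReal

/-- The axis-parallel cube in `ℝⁿ` with lower corner `c` and side length `r`. -/
def euCube {n : ℕ} (c : EuclideanSpace ℝ (Fin n)) (r : ℝ) : Set (EuclideanSpace ℝ (Fin n)) :=
  {x | ∀ i, c i ≤ x i ∧ x i ≤ c i + r}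

/-- `A₂(σ,ω) = sup_Q (σ(Q)/|Q|)(ω(Q)/|Q|)` over all axis-parallel cubes `Q`. -/
noncomputable def A2char {n : ℕ} (σ ω : Measure (EuclideanSpace ℝ (Fin n))) : ℝ≥0∞ :=
  ⨆ (c : EuclideanSpace ℝ (Fin n)) (r : ℝ) (_ : 0 < r),
    (σ (euCube c r) / volume (euCube c r)) * (ω (euCube c r) / volume (euCube c r))

open Metric

section Cubes

variable {n : ℕ}

lemma euCube_eq_preimage (c : EuclideanSpace ℝ (Fin n)) (r : ℝ) :
    euCube c r = (MeasurableEquiv.toLp 2 (Fin n → ℝ)).symm ⁻¹'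
      univ.pi fun i => Icc (c i) (c i + r) := by
  ext x
  simp [euCube, MeasurableEquiv.coe_toLp_symm, Pi.le_def, forall_and]

lemma measurableSet_euCube (c : EuclideanSpace ℝ (Fin n)) (r : ℝ) :
    MeasurableSet (euCube c r) := by
  rw [euCube_eq_preimage]
  exact MeasurableEquiv.measurable _ (.univ_pi fun _ => measurableSet_Icc)

lemma volume_euCube (c : EuclideanSpace ℝ (Fin n)) (r : ℝ) :
    volume (euCube c r) = ENNReal.ofReal r ^ n := by
  rw [euCube_eq_preimage,
    (EuclideanSpace.volume_preserving_symm_measurableEquiv_toLp (Fin n)).measure_preimage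
      (MeasurableSet.univ_pi fun _ => measurableSet_Icc).nullMeasurableSet,
    volume_pi_pi]
  simp [Real.volume_Icc]

lemma volume_euCube_ne_zero (c : EuclideanSpace ℝ (Fin n)) {r : ℝ} (hr : 0 < r) :
    volume (euCube c r) ≠ 0 := by
  rw [volume_euCube]
  exact pow_ne_zero _ (ENNReal.ofReal_pos.2 hr).ne'

lemma volume_euCube_ne_top (c : EuclideanSpace ℝ (Fin n)) (r : ℝ) :
    volume (euCube c r) ≠ ∞ := by
  rw [volume_euCube]
  exact pow_ne_top ofReal_ne_top

lemma mem_euCube_self (c : EuclideanSpace ℝ (Fin n)) {r : ℝ} (hr : 0 ≤ r) : c ∈ euCube c r :=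
  fun _ => ⟨le_rfl, le_add_of_nonneg_right hr⟩

lemma dist_le_of_mem_euCube {c x y : EuclideanSpace ℝ (Fin n)} {r : ℝ} (hr : 0 ≤ r)
    (hx : x ∈ euCube c r) (hy : y ∈ euCube c r) : dist x y ≤ √n * r := by
  have hcoord : ∀ i, dist (x i) (y i) ^ 2 ≤ r ^ 2 := fun i => by
    gcongr
    rw [Real.dist_eq, abs_sub_le_iff]
    constructor <;> linarith [hx i, hy i]
  calc dist x y = √(∑ i, dist (x i) (y i) ^ 2) := EuclideanSpace.dist_eq x y
    _ ≤ √(∑ _i : Fin n, r ^ 2) := Real.sqrt_le_sqrt (Finset.sum_le_sum fun i _ => hcoord i)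
    _ = √n * r := by simp [Real.sqrt_mul, Real.sqrt_sq hr]

lemma closedBall_subset_euCube (p : EuclideanSpace ℝ (Fin n)) (ρ : ℝ) :
    closedBall p ρ ⊆ euCube (WithLp.toLp 2 fun i => p i - ρ) (2 * ρ) := by
  intro x hx i
  have hxi := abs_le.1 (((Real.dist_eq _ _).symm.trans_le (PiLp.dist_apply_le x p i)).trans hx)
  constructor <;> linarith [hxi.1, hxi.2]

lemma lipschitzWith_of_dist_le_mul_side {α : Type*} [PseudoMetricSpace α]
    {f : EuclideanSpace ℝ (Fin n) → α} {A : ℝ}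
    (h : ∀ c r, 0 < r → ∀ x ∈ euCube c r, ∀ y ∈ euCube c r, dist (f x) (f y) ≤ A * r) :
    LipschitzWith (2 * A).toNNReal f := by
  refine LipschitzWith.of_dist_le' fun x y => ?_
  rcases eq_or_ne x y with rfl | hxy
  · simp
  have hball := closedBall_subset_euCube x (dist x y)
  calc dist (f x) (f y) ≤ A * (2 * dist x y) :=
        h _ _ (by positivity [dist_pos.2 hxy]) x (hball (mem_closedBall_self dist_nonneg))
          y (hball (mem_closedBall'.2 le_rfl))
    _ = 2 * A * dist x y := by ring

end Cubes

section A2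

variable {n : ℕ}

lemma le_A2char (σ ω : Measure (EuclideanSpace ℝ (Fin n))) (c : EuclideanSpace ℝ (Fin n))
    {r : ℝ} (hr : 0 < r) :
    σ (euCube c r) / volume (euCube c r) * (ω (euCube c r) / volume (euCube c r)) ≤
      A2char σ ω :=
  le_iSup_of_le c <| le_iSup_of_le r <| le_iSup_of_le hr le_rfl

lemma A2char_le {σ ω : Measure (EuclideanSpace ℝ (Fin n))} {B : ℝ≥0∞}
    (h : ∀ c r, 0 < r →
      σ (euCube c r) / volume (euCube c r) * (ω (euCube c r) / volume (euCube c r)) ≤ B) :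
    A2char σ ω ≤ B :=
  iSup_le fun c => iSup_le fun r => iSup_le fun hr => h c r hr

lemma A2char_volume_le_one : A2char (volume : Measure (EuclideanSpace ℝ (Fin n))) volume ≤ 1 :=
  A2char_le fun c _ hr => by
    rw [ENNReal.div_self (volume_euCube_ne_zero c hr) (volume_euCube_ne_top c _), one_mul]

lemma measure_div_volume_euCube_le (μ : Measure (EuclideanSpace ℝ (Fin n)))
    {s : Set (EuclideanSpace ℝ (Fin n))} {c c' : EuclideanSpace ℝ (Fin n)} {r M : ℝ}
    (hM : 0 < M) (hs : s ⊆ euCube c' (M * r)) :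
    μ s / volume (euCube c r) ≤
      ENNReal.ofReal M ^ n * (μ (euCube c' (M * r)) / volume (euCube c' (M * r))) := by
  have hM0 : ENNReal.ofReal M ^ n ≠ 0 := pow_ne_zero _ (ENNReal.ofReal_pos.2 hM).ne'
  have hMtop : ENNReal.ofReal M ^ n ≠ ∞ := pow_ne_top ofReal_ne_top
  have hvol : volume (euCube c' (M * r)) = ENNReal.ofReal M ^ n * volume (euCube c r) := by
    rw [volume_euCube, volume_euCube, ENNReal.ofReal_mul hM.le, mul_pow]
  rw [hvol, ← mul_div_assoc, ENNReal.mul_div_mul_left _ _ hM0 hMtop]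
  gcongr

theorem A2char_map_le_of_preimage_euCube_subset_closedBall
    {f : EuclideanSpace ℝ (Fin n) → EuclideanSpace ℝ (Fin n)} (hf : Measurable f)
    {M : ℝ} (hM : 0 < M)
    (hball : ∀ c r, 0 < r → ∃ p, f ⁻¹' euCube c r ⊆ closedBall p (M * r))
    (σ ω : Measure (EuclideanSpace ℝ (Fin n))) :
    A2char (σ.map f) (ω.map f) ≤ (ENNReal.ofReal (2 * M) ^ n) ^ 2 * A2char σ ω := by
  refine A2char_le fun c r hr => ?_
  obtain ⟨p, hp⟩ := hball c r hr
  set Q := euCube (WithLp.toLp 2 fun i => p i - M * r) (2 * M * r)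
  have hsub : f ⁻¹' euCube c r ⊆ Q := by
    simpa only [Q, mul_assoc] using hp.trans (closedBall_subset_euCube p (M * r))
  have hM2 : 0 < 2 * M := by positivity
  rw [Measure.map_apply hf (measurableSet_euCube c r),
    Measure.map_apply hf (measurableSet_euCube c r)]
  calc σ (f ⁻¹' euCube c r) / volume (euCube c r) * (ω (f ⁻¹' euCube c r) / volume (euCube c r))
      ≤ ENNReal.ofReal (2 * M) ^ n * (σ Q / volume Q) *
          (ENNReal.ofReal (2 * M) ^ n * (ω Q / volume Q)) :=
        mul_le_mul' (measure_div_volume_euCube_le σ hM2 hsub)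
          (measure_div_volume_euCube_le ω hM2 hsub)
    _ = (ENNReal.ofReal (2 * M) ^ n) ^ 2 * (σ Q / volume Q * (ω Q / volume Q)) := by ring
    _ ≤ (ENNReal.ofReal (2 * M) ^ n) ^ 2 * A2char σ ω := by
        gcongr
        exact le_A2char σ ω _ (by positivity)

lemma preimage_euCube_subset_closedBall
    {e : EuclideanSpace ℝ (Fin n) ≃ EuclideanSpace ℝ (Fin n)} {L : ℝ≥0}
    (hL : LipschitzWith L e.symm) (c : EuclideanSpace ℝ (Fin n)) {r : ℝ} (hr : 0 ≤ r) :
    e ⁻¹' euCube c r ⊆ closedBall (e.symm c) (L * √n * r) := by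
  intro z hz
  calc dist z (e.symm c) = dist (e.symm (e z)) (e.symm c) := by rw [e.symm_apply_apply]
    _ ≤ L * dist (e z) c := hL.dist_le_mul _ _
    _ ≤ L * (√n * r) := by gcongr; exact dist_le_of_mem_euCube hr hz (mem_euCube_self c hr)
    _ = L * √n * r := by ring

theorem A2char_map_le_of_lipschitzWith_symm
    {e : EuclideanSpace ℝ (Fin n) ≃ EuclideanSpace ℝ (Fin n)} (he : Measurable e) {L : ℝ≥0}
    (hL : LipschitzWith L e.symm) (σ ω : Measure (EuclideanSpace ℝ (Fin n))) :
    A2char (σ.map e) (ω.map e) ≤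
      (ENNReal.ofReal (2 * (L * √n + 1)) ^ n) ^ 2 * A2char σ ω :=
  A2char_map_le_of_preimage_euCube_subset_closedBall he (by positivity)
    (fun c r hr => ⟨e.symm c, (preimage_euCube_subset_closedBall hL c hr.le).trans
      (closedBall_subset_closedBall (by nlinarith))⟩) σ ω

end A2

lemma le_max_one_mul_of_pow_le_mul_pow {a b C : ℝ} {m : ℕ} (ha : 0 ≤ a) (hb : 0 ≤ b)
    (hm : m ≠ 0) (h : a ^ m ≤ C * b ^ m) : a ≤ max 1 C * b := by
  have hC : C ≤ max 1 C ^ m := (le_max_right 1 C).trans (le_self_pow₀ (le_max_left 1 C) hm)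
  rw [← pow_le_pow_iff_left₀ ha (by positivity) hm, mul_pow]
  exact h.trans (by gcongr)

section Stability

variable {n : ℕ}

def IsShapePreserving (K : ℝ≥0) (f : EuclideanSpace ℝ (Fin n) → EuclideanSpace ℝ (Fin n)) :
    Prop :=
  ∀ (c : EuclideanSpace ℝ (Fin n)) (r : ℝ), 0 < r →
    ∃ (c₁ : EuclideanSpace ℝ (Fin n)) (r₁ : ℝ) (c₂ : EuclideanSpace ℝ (Fin n)) (r₂ : ℝ),
      0 < r₁ ∧ euCube c₁ r₁ ⊆ f ⁻¹' (euCube c r) ∧ f ⁻¹' (euCube c r) ⊆ euCube c₂ r₂ ∧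
      r₂ ≤ (K : ℝ) * r₁

lemma volume_preimage_euCube_sq_le
    {f : EuclideanSpace ℝ (Fin n) → EuclideanSpace ℝ (Fin n)} (hf : Measurable f) {C : ℝ≥0∞}
    (hA : A2char (volume.map f) (volume.map f) ≤ C) (c : EuclideanSpace ℝ (Fin n)) {r : ℝ}
    (hr : 0 < r) :
    volume (f ⁻¹' euCube c r) ^ 2 ≤ C * volume (euCube c r) ^ 2 := by
  have hV0 := volume_euCube_ne_zero c hr
  have hVtop := volume_euCube_ne_top c r
  have h := (le_A2char _ _ c hr).trans hA
  rwa [Measure.map_apply hf (measurableSet_euCube c r), div_eq_mul_inv, mul_mul_mul_comm,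
    ← ENNReal.mul_inv (.inl hV0) (.inl hVtop), ← div_eq_mul_inv,
    ENNReal.div_le_iff (mul_ne_zero hV0 hV0) (mul_ne_top hVtop hVtop), ← sq, ← sq] at h

lemma side_le_of_euCube_subset (hn : 0 < n) {C : ℝ≥0∞} (hC : C ≠ ∞)
    {s : Set (EuclideanSpace ℝ (Fin n))} {c c₁ : EuclideanSpace ℝ (Fin n)} {r r₁ : ℝ}
    (hr : 0 ≤ r) (hr₁ : 0 ≤ r₁) (hs : volume s ^ 2 ≤ C * volume (euCube c r) ^ 2)
    (hsub : euCube c₁ r₁ ⊆ s) :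
    r₁ ≤ max 1 C.toReal * r := by
  refine le_max_one_mul_of_pow_le_mul_pow hr₁ hr (m := 2 * n) (by omega) ?_
  have h : ENNReal.ofReal r₁ ^ (2 * n) ≤ C * ENNReal.ofReal r ^ (2 * n) :=
    calc ENNReal.ofReal r₁ ^ (2 * n) = volume (euCube c₁ r₁) ^ 2 := by
          rw [volume_euCube, ← pow_mul, mul_comm]
      _ ≤ volume s ^ 2 := by gcongr
      _ ≤ C * volume (euCube c r) ^ 2 := hs
      _ = C * ENNReal.ofReal r ^ (2 * n) := by rw [volume_euCube, ← pow_mul, mul_comm n]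
  have := ENNReal.toReal_mono (mul_ne_top hC (pow_ne_top ofReal_ne_top)) h
  simpa [ENNReal.toReal_ofReal hr₁, ENNReal.toReal_ofReal hr] using this

theorem exists_lipschitzWith_symm_of_A2char_volume_le
    {e : EuclideanSpace ℝ (Fin n) ≃ EuclideanSpace ℝ (Fin n)} (he : Measurable e) {K : ℝ≥0}
    (hshape : IsShapePreserving K e) {C : ℝ≥0∞} (hC : C ≠ ∞)
    (hA : A2char (volume.map e) (volume.map e) ≤ C) :
    ∃ L : ℝ≥0, LipschitzWith L e.symm := by
  rcases n.eq_zero_or_pos with rfl | hn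
  · exact ⟨0, LipschitzWith.of_dist_le_mul fun x y => by simp [Subsingleton.elim x y]⟩
  refine ⟨_, lipschitzWith_of_dist_le_mul_side (A := √n * K * max 1 C.toReal)
    fun c r hr x hx y hy => ?_⟩
  obtain ⟨c₁, r₁, c₂, r₂, hr₁, hinner, houter, hK⟩ := hshape c r hr
  have hx' : e.symm x ∈ euCube c₂ r₂ := houter (by simpa using hx)
  have hy' : e.symm y ∈ euCube c₂ r₂ := houter (by simpa using hy)
  have hr₂ : 0 ≤ r₂ := by linarith [(hx' ⟨0, hn⟩).1, (hx' ⟨0, hn⟩).2]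
  have hr₁r : r₁ ≤ max 1 C.toReal * r :=
    side_le_of_euCube_subset hn hC hr.le hr₁.le (volume_preimage_euCube_sq_le he hA c hr) hinner
  calc dist (e.symm x) (e.symm y) ≤ √n * r₂ := dist_le_of_mem_euCube hr₂ hx' hy'
    _ ≤ √n * (K * (max 1 C.toReal * r)) := by gcongr; exact hK.trans (by gcongr)
    _ = √n * K * max 1 C.toReal * r := by ring

end Stability

theorem stmt13_general (n : ℕ) (e : EuclideanSpace ℝ (Fin n) ≃ EuclideanSpace ℝ (Fin n))
    (hlip : LipschitzWith 1 ⇑e)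
    (K : ℝ≥0)
    (hshape : ∀ (c : EuclideanSpace ℝ (Fin n)) (r : ℝ), 0 < r →
      ∃ (c₁ : EuclideanSpace ℝ (Fin n)) (r₁ : ℝ) (c₂ : EuclideanSpace ℝ (Fin n)) (r₂ : ℝ),
        0 < r₁ ∧ euCube c₁ r₁ ⊆ ⇑e ⁻¹' (euCube c r) ∧ ⇑e ⁻¹' (euCube c r) ⊆ euCube c₂ r₂ ∧
        r₂ ≤ (K : ℝ) * r₁) :
    (∃ C : ℝ≥0∞, 0 < C ∧ C < ⊤ ∧
        ∀ (σ ω : Measure (EuclideanSpace ℝ (Fin n))),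
          IsLocallyFiniteMeasure σ → IsLocallyFiniteMeasure ω →
          A2char (Measure.map ⇑e σ) (Measure.map ⇑e ω) ≤ C * A2char σ ω) ↔
      (∃ L : ℝ≥0, LipschitzWith L ⇑e.symm) := by
  have he : Measurable e := hlip.continuous.measurable
  constructor
  · rintro ⟨C, -, hC, hA⟩
    have hvol : A2char (volume.map e) (volume.map e) ≤ C :=
      calc A2char (volume.map e) (volume.map e) ≤ C * A2char volume volume := hA _ _ inferInstance inferInstance
        _ ≤ C := mul_le_of_le_one_right' A2char_volume_le_one
    exact exists_lipschitzWith_symm_of_A2char_volume_le he hshape hC.ne hvol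
  · rintro ⟨L, hL⟩
    have hM : 0 < 2 * ((L : ℝ) * √n + 1) := by positivity
    exact ⟨_, ENNReal.pow_pos (ENNReal.pow_pos (ENNReal.ofReal_pos.2 hM) n) 2,
      pow_lt_top (pow_lt_top ofReal_lt_top), fun σ ω _ _ =>
        A2char_map_le_of_lipschitzWith_symm he hL σ ω⟩

/-- Let `Φ : ℝⁿ → ℝⁿ` be a shape-preserving invertible Lipschitz map with `‖DΦ‖_∞ ≤ 1`
(encoded by `LipschitzWith 1`), differentiable, and for which the change of variables formula
holds.  Then `Φ` is `A₂`-stable (there is `C` with `A₂(Φ_*σ, Φ_*ω) ≤ C·A₂(σ,ω)` for all pairs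
of locally finite positive Borel measures) if and only if `Φ` is biLipschitz (equivalently,
its inverse is Lipschitz). -/
theorem stmt13 (n : ℕ) (e : EuclideanSpace ℝ (Fin n) ≃ EuclideanSpace ℝ (Fin n))
    (hlip : LipschitzWith 1 ⇑e) (hdiff : Differentiable ℝ ⇑e)
    (K : ℝ≥0)
    (hshape : ∀ (c : EuclideanSpace ℝ (Fin n)) (r : ℝ), 0 < r →
      ∃ (c₁ : EuclideanSpace ℝ (Fin n)) (r₁ : ℝ) (c₂ : EuclideanSpace ℝ (Fin n)) (r₂ : ℝ),
        0 < r₁ ∧ euCube c₁ r₁ ⊆ ⇑e ⁻¹' (euCube c r) ∧ ⇑e ⁻¹' (euCube c r) ⊆ euCube c₂ r₂ ∧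
        r₂ ≤ (K : ℝ) * r₁)
    (hcv : ∀ s : Set (EuclideanSpace ℝ (Fin n)), MeasurableSet s →
      volume (⇑e '' s) = ∫⁻ x in s, ENNReal.ofReal |(fderiv ℝ ⇑e x).det|) :
    (∃ C : ℝ≥0∞, 0 < C ∧ C < ⊤ ∧
        ∀ (σ ω : Measure (EuclideanSpace ℝ (Fin n))),
          IsLocallyFiniteMeasure σ → IsLocallyFiniteMeasure ω →
          A2char (Measure.map ⇑e σ) (Measure.map ⇑e ω) ≤ C * A2char σ ω) ↔
      (∃ L : ℝ≥0, LipschitzWith L ⇑e.symm) :=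
  stmt13_general n e hlip K hshape
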